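/- Let q ∈ {0,1} and let k be a non-negative integer, and let W be the word (list) in SL(2,ℤ) consisting of q copies of the six-letter block (s₁, s₂, s₁, s₂, s₁, s₂) followed by k copies of s₁ (so that the product of the entries of W is (s₁ s₂)^{3q} s₁^k). If W′ is a subword (sublist) of W whose entries multiply to the identity in SL(2,ℤ), then W′ is the empty word. -/
import Mathlib


/-- The group `SL(2, ℤ)`. -/
abbrev SL2Z := Matrix.SpecialLinearGroup (Fin 2) ℤ

/-- The matrix `s₁ = [[1,0],[1,1]]` as an element of `SL(2, ℤ)`. -/
def s1 : SL2Z := ⟨!![1, 0; 1, 1], by norm_num [Matrix.det_fin_two_of]⟩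

/-- The matrix `s₂ = [[1,-1],[0,1]]` as an element of `SL(2, ℤ)`. -/
def s2 : SL2Z := ⟨!![1, -1; 0, 1], by norm_num [Matrix.det_fin_two_of]⟩

/-- A single elementary transformation (Hurwitz move) on a tuple of group elements:
some consecutive pair `(a, b)` is replaced by `(a * b * a⁻¹, a)` or by `(b, b⁻¹ * a * b)`,
all other entries being fixed. -/
def HurwitzMove {G : Type*} [Group G] (l l' : List G) : Prop :=
  ∃ (u v : List G) (a b : G),
    (l = u ++ a :: b :: v ∧ l' = u ++ (a * b * a⁻¹) :: a :: v) ∨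
    (l = u ++ a :: b :: v ∧ l' = u ++ b :: (b⁻¹ * a * b) :: v)

/-- Two tuples are related by elementary transformations if one is obtained from the
other by a finite sequence of Hurwitz moves. -/
def HurwitzEquiv {G : Type*} [Group G] : List G → List G → Prop :=
  Relation.ReflTransGen HurwitzMove

lemma s1v : (s1 : Matrix (Fin 2) (Fin 2) ℤ) = !![1, 0; 1, 1] := rfl
lemma s2v : (s2 : Matrix (Fin 2) (Fin 2) ℤ) = !![1, -1; 0, 1] := rfl

lemma pow_s1 (m : ℕ) : ((s1 ^ m : SL2Z) : Matrix (Fin 2) (Fin 2) ℤ) = !![1, 0; (m:ℤ), 1] := by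
  induction m with
  | zero => simp [Matrix.one_fin_two]
  | succ n ih =>
    rw [pow_succ, Matrix.SpecialLinearGroup.coe_mul, ih, s1v, Matrix.mul_fin_two]
    push_cast; norm_num

lemma stmt5_aux (k : ℕ) (W' : List SL2Z)
    (hsub : W'.Sublist ([s1, s2, s1, s2, s1, s2] ++ List.replicate k s1))
    (hprod : W'.prod = 1) : W' = [] := by
  rw [List.sublist_append_iff] at hsub
  obtain ⟨l₁, l₂, rfl, h₁, h₂⟩ := hsub
  obtain ⟨m, -, rfl⟩ := List.sublist_replicate_iff.mp h₂
  rw [List.prod_append, List.prod_replicate] at hprod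
  have hmem := List.mem_sublists.2 h₁
  fin_cases hmem <;>
  · have h00 := congrArg (fun g : SL2Z => (g : Matrix (Fin 2) (Fin 2) ℤ) 0 0) hprod
    have h01 := congrArg (fun g : SL2Z => (g : Matrix (Fin 2) (Fin 2) ℤ) 0 1) hprod
    have h10 := congrArg (fun g : SL2Z => (g : Matrix (Fin 2) (Fin 2) ℤ) 1 0) hprod
    have h11 := congrArg (fun g : SL2Z => (g : Matrix (Fin 2) (Fin 2) ℤ) 1 1) hprod
    simp only [List.prod_cons, List.prod_nil, one_mul, mul_one,
      Matrix.SpecialLinearGroup.coe_mul, Matrix.SpecialLinearGroup.coe_one,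
      pow_s1, s1v, s2v, Matrix.mul_fin_two, Matrix.one_fin_two, Matrix.of_apply,
      Matrix.cons_val', Matrix.cons_val_zero, Matrix.cons_val_one,
      Matrix.head_cons, Matrix.head_fin_const, Matrix.empty_val',
      Matrix.cons_val_fin_one] at h00 h01 h10 h11
    simp only [List.cons_append, List.nil_append, List.append_eq_nil_iff,
      List.replicate_eq_nil_iff, reduceCtorEq, List.cons_ne_nil, false_and, and_true]
    omega

/-- **Lemma (Baykur–Kamada, Lemma 4.4).**
Let `W` be the word consisting of `q` copies of the block `(s₁, s₂, s₁, s₂, s₁, s₂)`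
(`q ∈ {0,1}`) followed by `k` copies of `s₁`. Any subword of `W` whose entries multiply
to the identity is the empty word. -/
theorem stmt5 (q k : ℕ) (hq : q = 0 ∨ q = 1) (W' : List SL2Z)
    (hsub : W'.Sublist ((List.replicate q [s1, s2, s1, s2, s1, s2]).flatten ++
      List.replicate k s1))
    (hprod : W'.prod = 1) :
    W' = [] := by
  rcases hq with rfl | rfl
  · simp only [List.replicate_zero, List.flatten_nil, List.nil_append] at hsub
    obtain ⟨m, -, rfl⟩ := List.sublist_replicate_iff.mp hsub
    rw [List.prod_replicate] at hprod
    have h10 := congrArg (fun g : SL2Z => (g : Matrix (Fin 2) (Fin 2) ℤ) 1 0) hprod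
    simp only [pow_s1, Matrix.SpecialLinearGroup.coe_one, Matrix.one_fin_two,
      Matrix.of_apply, Matrix.cons_val', Matrix.cons_val_zero, Matrix.cons_val_one,
      Matrix.head_cons, Matrix.head_fin_const, Matrix.empty_val',
      Matrix.cons_val_fin_one] at h10
    simp only [List.replicate_eq_nil_iff]
    omega
  · simp only [List.replicate_one, List.flatten_cons, List.flatten_nil,
      List.append_nil] at hsub
    exact stmt5_aux k W' hsub hprod
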